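/- Let n ≥ 1, σ > 0, μ ∈ [0,1], and let Δ, ξ, γ be real numbers. Let A and A⁰ be real symmetric n×n matrices, let x* ∈ {±1}^n and X* := x* (x*)^T, and let W, T ⊆ {1,…,n} with |W ∩ T| ≥ (1−2μ)·n. Assume A_T = A⁰_T (A agrees with A⁰ on all entries indexed by T×T). Let X be a real n×n symmetric positive semidefinite matrix with X_ii = 1 for all i. Assume: (i) ⟨A_W, X⟩ ≥ (2+Δ)·(1−μ)²·n²; (ii) SDP(A_W − A_{W∩T}) ≤ γ·n²; (iii) SDP((A⁰ − σ·X*)_{W∩T}) ≤ (2+ξ)·n². Then ⟨X, X*⟩ ≥ (1/σ)·((2+Δ)(1−μ)² − γ − (2+ξ))·n² − 4·μ·n². -/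

import Mathlib

open Matrix

/-- Frobenius inner product ⟨A, B⟩ = Σ_{i,j} A_ij B_ij. -/
noncomputable def mip {n : ℕ} (A B : Matrix (Fin n) (Fin n) ℝ) : ℝ :=
  ∑ i, ∑ j, A i j * B i j

/-- Basic SDP value of a matrix. -/
noncomputable def SDP {n : ℕ} (M : Matrix (Fin n) (Fin n) ℝ) : ℝ :=
  sSup {v : ℝ | ∃ X : Matrix (Fin n) (Fin n) ℝ,
    X.PosSemidef ∧ (∀ i, X i i = 1) ∧ v = mip M X}

/-- Restriction M_S of a matrix to a principal submatrix (zeroing entries outside S×S). -/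
def restrict {n : ℕ} (M : Matrix (Fin n) (Fin n) ℝ) (S : Finset (Fin n)) :
    Matrix (Fin n) (Fin n) ℝ :=
  fun i j => if i ∈ S ∧ j ∈ S then M i j else 0

lemma abs_entry_le {n : ℕ} {X : Matrix (Fin n) (Fin n) ℝ} (hX : X.PosSemidef)
    (hXd : ∀ i, X i i = 1) (i j : Fin n) : |X i j| ≤ 1 := by
  rcases eq_or_ne i j with rfl | hij
  · simp [hXd i]
  · have hsym : X j i = X i j := by
      have := congrFun (congrFun hX.1 i) j
      simpa [Matrix.conjTranspose_apply] using this
    have key : ∀ c : ℝ, 0 ≤ (1 + c * X i j) + (c * X j i + c * c) := by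
      intro c
      have h0 := hX.dotProduct_mulVec_nonneg (fun k => (if k = i then 1 else 0) + (if k = j then c else 0))
      simp only [star_trivial] at h0
      have hc : (fun k => (if k = i then (1:ℝ) else 0) + (if k = j then c else 0)) ⬝ᵥ
          X *ᵥ (fun k => (if k = i then 1 else 0) + (if k = j then c else 0)) =
          (1 + c * X i j) + (c * X j i + c * c) := by
        simp [dotProduct, mulVec, Finset.sum_add_distrib, mul_add, add_mul, mul_ite, ite_mul,
          Finset.sum_ite_eq', hij, hij.symm, hXd, mul_comm]
      rw [hc] at h0
      exact h0
    have h1 := key 1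
    have h2 := key (-1)
    rw [hsym] at h1 h2
    rw [abs_le]
    constructor <;> nlinarith

lemma mip_le_SDP {n : ℕ} (M X : Matrix (Fin n) (Fin n) ℝ) (hX : X.PosSemidef)
    (hXd : ∀ i, X i i = 1) : mip M X ≤ SDP M := by
  apply le_csSup
  · refine ⟨∑ i, ∑ j, |M i j|, ?_⟩
    rintro v ⟨Y, hY, hYd, rfl⟩
    refine Finset.sum_le_sum fun i _ => Finset.sum_le_sum fun j _ => ?_
    calc M i j * Y i j ≤ |M i j * Y i j| := le_abs_self _
      _ = |M i j| * |Y i j| := abs_mul _ _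
      _ ≤ |M i j| * 1 := mul_le_mul_of_nonneg_left (abs_entry_le hY hYd i j) (abs_nonneg _)
      _ = |M i j| := mul_one _
  · exact ⟨X, hX, hXd, rfl⟩

lemma mip_sub_left {n : ℕ} (A B X : Matrix (Fin n) (Fin n) ℝ) :
    mip (A - B) X = mip A X - mip B X := by
  simp [mip, sub_mul, Finset.sum_sub_distrib]

/-- Deterministic core of Lemma E.2 for robust ℤ₂ synchronization. -/
theorem z2_correlation_lower_bound {n : ℕ} (hn : 1 ≤ n)
    (σ μ : ℝ) (hσ : 0 < σ) (hμ0 : 0 ≤ μ) (hμ1 : μ ≤ 1) (Δ ξ γ : ℝ)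
    (A A0 : Matrix (Fin n) (Fin n) ℝ) (hAsymm : A.IsSymm) (hA0symm : A0.IsSymm)
    (xstar : Fin n → ℝ) (hxs : ∀ i, xstar i = 1 ∨ xstar i = -1)
    (Xstar : Matrix (Fin n) (Fin n) ℝ)
    (hXstar : Xstar = Matrix.vecMulVec xstar xstar)
    (W T : Finset (Fin n)) (hWT : (1 - 2 * μ) * n ≤ ((W ∩ T).card : ℝ))
    (hagree : restrict A T = restrict A0 T)
    (X : Matrix (Fin n) (Fin n) ℝ) (hX : X.PosSemidef) (hXd : ∀ i, X i i = 1)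
    (h1 : (2 + Δ) * (1 - μ) ^ 2 * (n : ℝ) ^ 2 ≤ mip (restrict A W) X)
    (h2 : SDP (restrict A W - restrict A (W ∩ T)) ≤ γ * (n : ℝ) ^ 2)
    (h3 : SDP (restrict (A0 - σ • Xstar) (W ∩ T)) ≤ (2 + ξ) * (n : ℝ) ^ 2) :
    (1 / σ) * ((2 + Δ) * (1 - μ) ^ 2 - γ - (2 + ξ)) * (n : ℝ) ^ 2 -
      4 * μ * (n : ℝ) ^ 2 ≤ mip X Xstar := by

  set S := W ∩ T with hS
  -- agreement on S
  have hAS : restrict A S = restrict A0 S := by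
    funext i j
    by_cases h : i ∈ S ∧ j ∈ S
    · have hiT : i ∈ T := (Finset.mem_inter.1 h.1).2
      have hjT : j ∈ T := (Finset.mem_inter.1 h.2).2
      have := congrFun (congrFun hagree i) j
      simp only [restrict, hiT, hjT, and_self, if_true] at this
      simp [restrict, h, this]
    · simp [restrict, h]
  -- decomposition of the restricted matrix
  have hdec : restrict (A0 - σ • Xstar) S = restrict A S - σ • restrict Xstar S := by
    funext i j
    by_cases h : i ∈ S ∧ j ∈ S
    · simp [restrict, h, hAS ▸ congrFun (congrFun hAS i) j, Matrix.sub_apply,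
        Matrix.smul_apply]
      have := congrFun (congrFun hAS i) j
      simp [restrict, h] at this
      rw [this]
    · simp [restrict, h, Matrix.sub_apply, Matrix.smul_apply]
  -- SDP bounds applied to X
  have hb2 : mip (restrict A W - restrict A S) X ≤ γ * (n : ℝ) ^ 2 :=
    (mip_le_SDP _ X hX hXd).trans h2
  have hb3 : mip (restrict (A0 - σ • Xstar) S) X ≤ (2 + ξ) * (n : ℝ) ^ 2 :=
    (mip_le_SDP _ X hX hXd).trans h3
  -- mip linearity
  have hsmul : mip (σ • restrict Xstar S) X = σ * mip (restrict Xstar S) X := by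
    simp [mip, Finset.mul_sum, mul_assoc]
  have hkey : ((2 + Δ) * (1 - μ) ^ 2 - γ - (2 + ξ)) * (n : ℝ) ^ 2 ≤
      σ * mip (restrict Xstar S) X := by
    have e1 : mip (restrict (A0 - σ • Xstar) S) X =
        mip (restrict A S) X - σ * mip (restrict Xstar S) X := by
      rw [hdec, mip_sub_left, hsmul]
    have e2 : mip (restrict A W - restrict A S) X =
        mip (restrict A W) X - mip (restrict A S) X := mip_sub_left _ _ _
    linarith
  set t := mip (restrict Xstar S) X with ht
  have hts : (1 / σ) * ((2 + Δ) * (1 - μ) ^ 2 - γ - (2 + ξ)) * (n : ℝ) ^ 2 ≤ t := by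
    rw [div_mul_eq_mul_div, div_mul_eq_mul_div, one_mul, div_le_iff₀ hσ]
    linarith [hkey]
  -- bound on |Xstar| entries
  have hXsabs : ∀ i j, |Xstar i j| = 1 := by
    intro i j
    rw [hXstar]
    simp only [Matrix.vecMulVec_apply, abs_mul]
    rcases hxs i with h | h <;> rcases hxs j with h' | h' <;> simp [h, h']
  -- correlation comparison
  have hterm : ∀ i j : Fin n,
      (if i ∈ S ∧ j ∈ S then (0:ℝ) else -1) ≤ X i j * Xstar i j - restrict Xstar S i j * X i j := by
    intro i j
    by_cases h : i ∈ S ∧ j ∈ S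
    · simp [restrict, h, mul_comm]
    · simp only [restrict, h, if_false, if_neg h, zero_mul, sub_zero]
      have : |X i j * Xstar i j| ≤ 1 := by
        rw [abs_mul, hXsabs i j, mul_one]; exact abs_entry_le hX hXd i j
      linarith [(abs_le.1 this).1]
  have hcard_le : ((S.card : ℝ)) ≤ n := by
    exact_mod_cast (le_trans (Finset.card_le_univ S) (by simp))
  have hcount : ∑ i : Fin n, ∑ j : Fin n, (if i ∈ S ∧ j ∈ S then (0:ℝ) else -1)
      = -((n:ℝ)^2 - (S.card:ℝ)^2) := by
    have : ∀ i j : Fin n, (if i ∈ S ∧ j ∈ S then (0:ℝ) else -1)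
        = (if i ∈ S then (1:ℝ) else 0) * (if j ∈ S then (1:ℝ) else 0) - 1 := by
      intro i j; by_cases hi : i ∈ S <;> by_cases hj : j ∈ S <;> simp [hi, hj]
    simp only [this]
    rw [Finset.sum_congr rfl (fun i _ => Finset.sum_sub_distrib _ _), Finset.sum_sub_distrib]
    simp [← Finset.sum_mul, Finset.sum_boole, Finset.mul_sum]
    ring
  have hdiff : -((n:ℝ)^2 - (S.card:ℝ)^2) ≤ mip X Xstar - t := by
    have : mip X Xstar - t = ∑ i, ∑ j, (X i j * Xstar i j - restrict Xstar S i j * X i j) := by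
      simp [mip, ht, Finset.sum_sub_distrib]
    rw [this, ← hcount]
    exact Finset.sum_le_sum fun i _ => Finset.sum_le_sum fun j _ => hterm i j
  -- counting bound: n² - |S|² ≤ 4 μ n²
  have hcard_nn : (0:ℝ) ≤ (S.card : ℝ) := Nat.cast_nonneg _
  have hn1 : (1:ℝ) ≤ n := by exact_mod_cast hn
  have hcb : (n:ℝ)^2 - (S.card:ℝ)^2 ≤ 4 * μ * (n:ℝ)^2 := by
    rcases le_or_gt (2*μ) 1 with hc | hc
    · have h' : (1 - 2*μ) * n ≤ (S.card : ℝ) := hWT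
      have h0 : (0:ℝ) ≤ (1 - 2*μ) * n := by nlinarith
      nlinarith [sq_nonneg ((S.card:ℝ) - (1-2*μ)*n)]
    · nlinarith [sq_nonneg ((S.card:ℝ))]
  linarith
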